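/- arXiv:1602.08338 — 7 statements merged into one kernel-verified Lean document; each statement's English description precedes it below -/
import Mathlib

section
/- Suppose the inf-sup condition holds with constant γ > 0. Then for every subspace U_H of U and every nonzero w_H ∈ U_H, there exists a nonzero v in the optimal test space V^opt(U_H) = T(U_H) with b(w_H, v) ≥ γ ‖w_H‖_U ‖v‖_V; in particular, the discrete inf-sup constant over the pair (U_H, V^opt(U_H)) is at least γ: inf_{0≠w_H∈U_H} sup_{0≠v∈T(U_H)} b(w_H, v)/(‖w_H‖_U ‖v‖_V) ≥ γ. -/
open scoped RealInnerProductSpace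

/-- Under the inf-sup condition with constant `γ > 0`, for every subspace
`U_H` and every nonzero `w_H ∈ U_H` there is a nonzero `v` in the optimal test space
`T(U_H)` with `b(w_H, v) ≥ γ‖w_H‖‖v‖`; in particular the discrete inf-sup constant
over `(U_H, T(U_H))` is at least `γ`. -/
theorem stmt_1
    {U V : Type*} [NormedAddCommGroup U] [NormedSpace ℝ U]
    [NormedAddCommGroup V] [InnerProductSpace ℝ V]
    (B : U →L[ℝ] (V →L[ℝ] ℝ))
    (T : U → V) (hT : ∀ (w : U) (v : V), ⟪T w, v⟫ = B w v)
    (γ : ℝ) (hγ : 0 < γ)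
    (hinfsup : ∀ w : U, γ * ‖w‖ ≤ ‖B w‖)
    (U_H : Submodule ℝ U) (w_H : U) (hwH : w_H ∈ U_H) (hwH0 : w_H ≠ 0) :
    (∃ v ∈ T '' (U_H : Set U), v ≠ 0 ∧ γ * (‖w_H‖ * ‖v‖) ≤ B w_H v) ∧
    γ ≤ ⨆ v : {v : V // v ∈ T '' (U_H : Set U) ∧ v ≠ 0},
          B w_H v.1 / (‖w_H‖ * ‖v.1‖) := by
  have hnorm : ∀ w : U, ‖B w‖ = ‖T w‖ := by
    intro w
    have hB : (B w) = innerSL ℝ (T w) := by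
      ext v
      simp [hT w v]
    rw [hB, innerSL_apply_norm]
  set v := T w_H with hv
  have hwHnorm : 0 < ‖w_H‖ := norm_pos_iff.mpr hwH0
  have hv_mem : v ∈ T '' (U_H : Set U) := ⟨w_H, hwH, rfl⟩
  have hvnorm : γ * ‖w_H‖ ≤ ‖v‖ := by rw [← hnorm]; exact hinfsup w_H
  have hvpos : 0 < ‖v‖ := lt_of_lt_of_le (by positivity) hvnorm
  have hv0 : v ≠ 0 := norm_pos_iff.mp hvpos
  have hbv : B w_H v = ‖v‖ ^ 2 := by
    rw [← hT w_H v, ← real_inner_self_eq_norm_sq]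
  have hkey : γ * (‖w_H‖ * ‖v‖) ≤ B w_H v := by
    rw [hbv]
    nlinarith [hvnorm, hvpos]
  refine ⟨⟨v, hv_mem, hv0, hkey⟩, ?_⟩
  have hbdd : BddAbove (Set.range fun x : {x : V // x ∈ T '' (U_H : Set U) ∧ x ≠ 0} =>
      B w_H x.1 / (‖w_H‖ * ‖x.1‖)) := by
    refine ⟨‖B‖, ?_⟩
    rintro _ ⟨⟨x, hx, hx0⟩, rfl⟩
    have hxpos : 0 < ‖x‖ := norm_pos_iff.mpr hx0
    rw [div_le_iff₀ (by positivity)]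
    calc B w_H x ≤ ‖B w_H x‖ := le_abs_self _
      _ ≤ ‖B w_H‖ * ‖x‖ := (B w_H).le_opNorm x
      _ ≤ (‖B‖ * ‖w_H‖) * ‖x‖ := by
          gcongr
          exact B.le_opNorm w_H
      _ = ‖B‖ * (‖w_H‖ * ‖x‖) := by ring
  refine le_trans ?_ (le_ciSup hbdd ⟨v, hv_mem, hv0⟩)
  rw [le_div_iff₀ (by positivity)]
  exact hkey
end

section
/- Suppose the inf-sup condition holds with constant γ > 0 and let U_H be a finite-dimensional subspace of U. Then for every bounded linear functional f ∈ V' there exists a unique u_H ∈ U_H such that b(u_H, v) = f(v) for all v in the optimal test space V^opt(U_H) = T(U_H); i.e., the discrete Petrov–Galerkin problem with optimal test space is well posed. -/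
open scoped RealInnerProductSpace

/-- Under the inf-sup condition with constant `γ > 0` and for a
finite-dimensional subspace `U_H ⊆ U`, for every `f ∈ V'` there is a unique
`u_H ∈ U_H` with `b(u_H, v) = f(v)` for all `v` in the optimal test space
`V^opt(U_H) = T(U_H)`. -/
theorem stmt_3
    {U V : Type*} [NormedAddCommGroup U] [NormedSpace ℝ U]
    [NormedAddCommGroup V] [InnerProductSpace ℝ V]
    (B : U →L[ℝ] (V →L[ℝ] ℝ))
    (T : U → V) (hT : ∀ (w : U) (v : V), ⟪T w, v⟫ = B w v)
    (γ : ℝ) (hγ : 0 < γ)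
    (hinfsup : ∀ w : U, γ * ‖w‖ ≤ ‖B w‖)
    (U_H : Submodule ℝ U) [FiniteDimensional ℝ U_H]
    (f : V →L[ℝ] ℝ) :
    ∃! u_H : U_H, ∀ v ∈ T '' (U_H : Set U), B (u_H : U) v = f v := by
  -- T equals innerSL inverse: B w = innerSL ℝ (T w)
  have hBw : ∀ w : U, B w = innerSL ℝ (T w) := by
    intro w; ext v; exact (hT w v).symm
  have hnorm : ∀ w : U, ‖B w‖ = ‖T w‖ := by
    intro w; rw [hBw w, innerSL_apply_norm]
  -- T is linear
  have hadd : ∀ x y : U, T (x + y) = T x + T y := by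
    intro x y
    apply ext_inner_right ℝ
    intro v
    rw [hT, inner_add_left, hT, hT, map_add]; rfl
  have hsmul : ∀ (c : ℝ) (x : U), T (c • x) = c • T x := by
    intro c x
    apply ext_inner_right ℝ
    intro v
    rw [hT, real_inner_smul_left, hT, map_smul]; rfl
  have hTzero : ∀ w : U, T w = 0 → w = 0 := by
    intro w hw
    have := hinfsup w
    rw [hnorm, hw, norm_zero] at this
    have : ‖w‖ ≤ 0 := by nlinarith [norm_nonneg w]
    exact norm_le_zero_iff.mp this
  -- S : U_H →ₗ V
  let Tlin : U →ₗ[ℝ] V := { toFun := T, map_add' := hadd, map_smul' := hsmul }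
  let S : U_H →ₗ[ℝ] V := Tlin.comp U_H.subtype
  have hSinj : Function.Injective S := by
    intro x y hxy
    have : T ((x : U) - y) = 0 := by
      have := hadd (x - (y : U)) (y : U)
      simp only [sub_add_cancel] at this
      have h2 : T ((x : U) - y) = T (x : U) - T (y : U) := by
        rw [this]; abel
      rw [h2]
      have : S x = S y := hxy
      simp only [S, Tlin, LinearMap.comp_apply, LinearMap.coe_mk, AddHom.coe_mk,
        Submodule.subtype_apply] at this
      rw [this]; abel
    have := hTzero _ this
    exact Subtype.ext (sub_eq_zero.mp this)
  -- A : U_H →ₗ Dual U_H,  A x y = ⟪S x, S y⟫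
  let A : U_H →ₗ[ℝ] Module.Dual ℝ U_H := (innerₗ V).compl₁₂ S S
  have hAinj : Function.Injective A := by
    rw [← LinearMap.ker_eq_bot, Submodule.eq_bot_iff]
    intro x hx
    have h0 : ⟪S x, S x⟫ = 0 := by
      have : A x = 0 := hx
      have := congrFun (congrArg DFunLike.coe this) x
      simpa [A] using this
    have : S x = 0 := by
      exact inner_self_eq_zero.mp h0
    have : S x = S 0 := by simpa using this
    exact hSinj this
  have hAsurj : Function.Surjective A :=
    (LinearMap.injective_iff_surjective_of_finrank_eq_finrank
      Subspace.dual_finrank_eq.symm).mp hAinj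
  obtain ⟨u, hu⟩ := hAsurj ((f : V →ₗ[ℝ] ℝ).comp S)
  have hu' : ∀ y : U_H, ⟪S u, S y⟫ = f (S y) := by
    intro y
    have := congrFun (congrArg DFunLike.coe hu) y
    simpa [A] using this
  have hSapp : ∀ y : U_H, S y = T (y : U) := fun y => rfl
  refine ⟨u, ?_, ?_⟩
  · rintro v ⟨x, hx, rfl⟩
    have := hu' ⟨x, hx⟩
    rw [hSapp, hSapp] at this
    rw [← hT]
    exact this
  · intro u' hu'eq
    -- u' satisfies same equations; show u' = u
    have key : ∀ y : U_H, ⟪S u', S y⟫ = f (S y) := by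
      intro y
      rw [hSapp, hSapp, hT]
      exact hu'eq (T (y : U)) ⟨(y : U), y.2, rfl⟩
    have hdiff : ∀ y : U_H, ⟪S (u' - u), S y⟫ = 0 := by
      intro y
      rw [map_sub, inner_sub_left, key y, hu' y, sub_self]
    have : S (u' - u) = 0 := inner_self_eq_zero.mp (hdiff (u' - u))
    have : S (u' - u) = S 0 := by simpa using this
    have := hSinj this
    exact sub_eq_zero.mp this
end

section
/- Let U_H ⊆ U be a subspace on which the map w ↦ P(T w) is injective. Then the discrete inf-sup constant over the pair (U_H, V^n.opt(U_H, V_h)) equals inf_{0≠w_H∈U_H} ‖P(T w_H)‖_V / ‖w_H‖_U; i.e., γ_H := inf_{0≠w_H∈U_H} sup_{0≠v∈P(T(U_H))} b(w_H, v)/(‖w_H‖_U ‖v‖_V) = inf_{0≠w_H∈U_H} ‖P(T w_H)‖_V / ‖w_H‖_U. -/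
open scoped RealInnerProductSpace

/-! On `V_h` the form `b(w, ·)` is represented by `P (T w)`, so for `v ∈ P(T(U_H)) ⊆ V_h`
Cauchy–Schwarz bounds `b(w, v) / ‖v‖` by `‖P (T w)‖`, and the bound is attained at
`v = P (T w)`, which lies in the near-optimal test space itself. -/

/-- For `p = 0` or `c = 0` both sides vanish, through `x / 0 = 0` and `⨆ ∅ = 0` in `ℝ`. -/
theorem iSup_inner_div_mul_norm_eq_norm_div {V : Type*} [NormedAddCommGroup V]
    [InnerProductSpace ℝ V] {S : Set V} {p : V} (hp : p ∈ S) {c : ℝ} (hc : 0 ≤ c) :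
    ⨆ v : {v : V // v ∈ S ∧ v ≠ 0}, ⟪p, v.1⟫ / (c * ‖v.1‖) = ‖p‖ / c := by
  rcases eq_or_ne p 0 with rfl | hp0
  · simp only [inner_zero_left, zero_div, norm_zero, Real.iSup_const_zero]
  have hbound : ∀ v : {v : V // v ∈ S ∧ v ≠ 0},
      ⟪p, v.1⟫ / (c * ‖v.1‖) ≤ ‖p‖ / c := by
    rintro ⟨v, -, hv0⟩
    rw [mul_comm, ← div_div]
    gcongr
    exact div_le_of_le_mul₀ (norm_nonneg _) (norm_nonneg _) (real_inner_le_norm p v)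
  have hattained : ⟪p, p⟫ / (c * ‖p‖) = ‖p‖ / c := by
    rw [real_inner_self_eq_norm_mul_norm, mul_comm c,
      mul_div_mul_left _ _ (norm_ne_zero_iff.mpr hp0)]
  have : Nonempty {v : V // v ∈ S ∧ v ≠ 0} := ⟨⟨p, hp, hp0⟩⟩
  refine le_antisymm (ciSup_le hbound) ?_
  exact hattained ▸ le_ciSup ⟨_, Set.forall_mem_range.mpr hbound⟩ ⟨p, hp, hp0⟩

theorem apply_eq_inner_orthogonalProjectionOnto {U V : Type*} [NormedAddCommGroup U]
    [NormedSpace ℝ U] [NormedAddCommGroup V] [InnerProductSpace ℝ V]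
    (B : U →L[ℝ] (V →L[ℝ] ℝ)) {T : U → V}
    (hT : ∀ (w : U) (v : V), ⟪T w, v⟫ = B w v) (K : Submodule ℝ V) [K.HasOrthogonalProjection]
    (w : U) {v : V} (hv : v ∈ K) :
    B w v = ⟪(K.orthogonalProjectionOnto (T w) : V), v⟫ := by
  rw [← hT]
  exact (K.inner_orthogonalProjectionOnto_eq_of_mem_right ⟨v, hv⟩ (T w)).symm

theorem stmt_6_general
    {U V : Type*} [NormedAddCommGroup U] [NormedSpace ℝ U]
    [NormedAddCommGroup V] [InnerProductSpace ℝ V]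
    (B : U →L[ℝ] (V →L[ℝ] ℝ))
    (T : U → V) (hT : ∀ (w : U) (v : V), ⟪T w, v⟫ = B w v)
    (V_h : Submodule ℝ V) [Submodule.HasOrthogonalProjection V_h]
    (U_H : Submodule ℝ U) :
    (⨅ w : {w : U // w ∈ U_H ∧ w ≠ 0},
      ⨆ v : {v : V //
        v ∈ (fun u => (Submodule.orthogonalProjectionOnto V_h (T u) : V)) '' (U_H : Set U) ∧ v ≠ 0},
        B w.1 v.1 / (‖w.1‖ * ‖v.1‖))
    = ⨅ w : {w : U // w ∈ U_H ∧ w ≠ 0},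
        ‖(Submodule.orthogonalProjectionOnto V_h (T w.1) : V)‖ / ‖w.1‖ := by
  refine iInf_congr fun w => (iSup_congr ?_).trans
    (iSup_inner_div_mul_norm_eq_norm_div (Set.mem_image_of_mem _ w.2.1) (norm_nonneg _))
  rintro ⟨v, ⟨u, -, rfl⟩, -⟩
  rw [apply_eq_inner_orthogonalProjectionOnto B hT V_h w.1 (Submodule.coe_mem _)]

/-- If `w ↦ P(T w)` is injective on `U_H`, the discrete inf-sup constant
over `(U_H, V^n.opt(U_H, V_h))` with `V^n.opt(U_H, V_h) := P(T(U_H))` equals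
`inf_{0≠w_H∈U_H} ‖P(T w_H)‖ / ‖w_H‖`. -/
theorem stmt_6
    {U V : Type*} [NormedAddCommGroup U] [NormedSpace ℝ U]
    [NormedAddCommGroup V] [InnerProductSpace ℝ V]
    (B : U →L[ℝ] (V →L[ℝ] ℝ))
    (T : U → V) (hT : ∀ (w : U) (v : V), ⟪T w, v⟫ = B w v)
    (V_h : Submodule ℝ V) [Submodule.HasOrthogonalProjection V_h]
    (U_H : Submodule ℝ U)
    (hinj : Set.InjOn (fun w => (Submodule.orthogonalProjectionOnto V_h (T w) : V)) (U_H : Set U)) :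
    (⨅ w : {w : U // w ∈ U_H ∧ w ≠ 0},
      ⨆ v : {v : V //
        v ∈ (fun u => (Submodule.orthogonalProjectionOnto V_h (T u) : V)) '' (U_H : Set U) ∧ v ≠ 0},
        B w.1 v.1 / (‖w.1‖ * ‖v.1‖))
    = ⨅ w : {w : U // w ∈ U_H ∧ w ≠ 0},
        ‖(Submodule.orthogonalProjectionOnto V_h (T w.1) : V)‖ / ‖w.1‖ :=
  stmt_6_general B T hT V_h U_H
end

section
/- Let u^1, …, u^N ∈ U be linearly independent, let v̄^i := P(T u^i), and define A ∈ ℝ^{N×N} by A_{ij} := b(u^i, v̄^j). If for every nonzero w_H in the span of u^1, …, u^N there exists v_h ∈ V_h with b(w_H, v_h) ≠ 0, then A is symmetric positive definite (xᵀAx > 0 for every nonzero x ∈ ℝ^N). -/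
/-!
Because `P` is the orthogonal projection onto `V_h`, `b(w, v) = ⟪P T w, v⟫` for every `v ∈ V_h`.
Hence `A` is the Gram matrix of the vectors `v̄ⁱ = P T uⁱ`, and the nondegeneracy of `b` on
`span {uⁱ} × V_h` forces these vectors to be linearly independent, so their Gram matrix is
positive definite.
-/

open scoped RealInnerProductSpace
open Matrix

theorem LinearIndependent.of_inner_eq_apply
    {U V ι : Type*} [NormedAddCommGroup U] [NormedSpace ℝ U]
    [NormedAddCommGroup V] [InnerProductSpace ℝ V] [Fintype ι]
    (B : U →L[ℝ] (V →L[ℝ] ℝ)) (K : Submodule ℝ V) {u : ι → U} {q : ι → V}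
    (hli : LinearIndependent ℝ u) (hq : ∀ i, ∀ v ∈ K, ⟪q i, v⟫ = B (u i) v)
    (hnondeg : ∀ w ∈ Submodule.span ℝ (Set.range u), w ≠ 0 → ∃ v ∈ K, B w v ≠ 0) :
    LinearIndependent ℝ q := by
  rw [Fintype.linearIndependent_iff] at hli ⊢
  intro c hc
  refine hli c (by_contra fun hw ↦ ?_)
  obtain ⟨v, hvK, hBv⟩ := hnondeg _ (Submodule.sum_mem _ fun i _ ↦
    Submodule.smul_mem _ _ (Submodule.subset_span ⟨i, rfl⟩)) hw
  apply hBv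
  calc B (∑ i, c i • u i) v = ∑ i, c i * ⟪q i, v⟫ := by simp [hq _ v hvK]
    _ = ⟪∑ i, c i • q i, v⟫ := by simp [sum_inner, real_inner_smul_left]
    _ = 0 := by rw [hc, inner_zero_left]

/-- If `u¹,…,u^N` are linearly independent, `v̄ⁱ := P(T uⁱ)`,
`A i j := b(uⁱ, v̄ʲ)`, and for every nonzero `w_H` in the span of the `uⁱ` there is
`v_h ∈ V_h` with `b(w_H, v_h) ≠ 0`, then `A` is symmetric positive definite:
`xᵀAx > 0` for every nonzero `x ∈ ℝ^N`. -/
theorem stmt_8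
    {U V : Type*} [NormedAddCommGroup U] [NormedSpace ℝ U]
    [NormedAddCommGroup V] [InnerProductSpace ℝ V]
    (B : U →L[ℝ] (V →L[ℝ] ℝ))
    (T : U → V) (hT : ∀ (w : U) (v : V), ⟪T w, v⟫ = B w v)
    (V_h : Submodule ℝ V) [V_h.HasOrthogonalProjection]
    (N : ℕ) (u : Fin N → U)
    (hli : LinearIndependent ℝ u)
    (vbar : Fin N → V)
    (hvbar : ∀ i, vbar i = (V_h.orthogonalProjectionOnto (T (u i)) : V))
    (A : Matrix (Fin N) (Fin N) ℝ)
    (hA : ∀ i j, A i j = B (u i) (vbar j))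
    (hnondeg : ∀ w_H ∈ Submodule.span ℝ (Set.range u), w_H ≠ 0 →
      ∃ v_h ∈ V_h, B w_H v_h ≠ 0) :
    A.IsSymm ∧ ∀ x : Fin N → ℝ, x ≠ 0 → 0 < x ⬝ᵥ A.mulVec x := by
  have hvbar_inner : ∀ i, ∀ v ∈ V_h, ⟪vbar i, v⟫ = B (u i) v := fun i v hv ↦ by
    rw [hvbar, ← hT]
    exact V_h.inner_orthogonalProjectionOnto_eq_of_mem_right ⟨v, hv⟩ _
  have hvbar_mem : ∀ j, vbar j ∈ V_h := fun j ↦ hvbar j ▸ Submodule.coe_mem _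
  have hA_gram : A = gram ℝ vbar := by
    ext i j
    rw [hA, gram_apply, hvbar_inner i _ (hvbar_mem j)]
  have hA_pos : A.PosDef := hA_gram ▸ posDef_gram_of_linearIndependent
    (LinearIndependent.of_inner_eq_apply B V_h hli hvbar_inner hnondeg)
  exact ⟨isHermitian_iff_isSymm.mp hA_pos.isHermitian,
    fun x hx ↦ by simpa using hA_pos.dotProduct_mulVec_pos hx⟩
end

section
/- Let U_H be a finite-dimensional subspace of U and suppose that for every nonzero w_H ∈ U_H there exists v_h ∈ V_h with b(w_H, v_h) ≠ 0. Then for every f ∈ V' there exists a unique u_H ∈ U_H such that b(u_H, v) = f(v) for all v in the near-optimal test space V^n.opt(U_H, V_h) = P(T(U_H)); i.e., the DPG discrete problem with near-optimal test space is uniquely solvable. -/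
open scoped RealInnerProductSpace

/-!
Since `⟪T w, ·⟫ = b(w, ·)`, the map `T` is linear, and `b(u, v) = ⟪P (T u), v⟫` for `v ∈ V_h`.
With `S := P ∘ T` on `U_H`, the discrete problem therefore reads `⟪S u, S w⟫ = f (S w)` for all
`w ∈ U_H`. The nondegeneracy hypothesis says exactly that `S` is injective, so the Gram form of `S`
is nondegenerate on the finite-dimensional space `U_H` and identifies `U_H` with its dual.
-/

open Function

section

variable {U V : Type*} [AddCommGroup U] [Module ℝ U] [NormedAddCommGroup V] [InnerProductSpace ℝ V]

def LinearMap.ofInnerLeft (T : U → V) (L : V → U →ₗ[ℝ] ℝ) (hT : ∀ w v, ⟪T w, v⟫ = L v w) :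
    U →ₗ[ℝ] V where
  toFun := T
  map_add' w w' := ext_inner_right ℝ fun v => by simp only [inner_add_left, hT, map_add]
  map_smul' c w := ext_inner_right ℝ fun v => by
    simp only [real_inner_smul_left, hT, map_smul, smul_eq_mul, RingHom.id_apply]

noncomputable def LinearMap.gramForm (S : U →ₗ[ℝ] V) : LinearMap.BilinForm ℝ U :=
  (innerₗ V).compl₁₂ S S

theorem LinearMap.gramForm_nondegenerate {S : U →ₗ[ℝ] V} (hS : Injective S) :
    S.gramForm.Nondegenerate := by
  have hsymm : S.gramForm.IsSymm := ⟨fun u w => real_inner_comm (S w) (S u)⟩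
  refine hsymm.isRefl.nondegenerate_iff_separatingLeft.mpr fun u hu => hS ?_
  rw [map_zero, ← inner_self_eq_zero (𝕜 := ℝ)]
  exact hu u

theorem LinearMap.existsUnique_inner_eq_of_injective [FiniteDimensional ℝ U] {S : U →ₗ[ℝ] V}
    (hS : Injective S) (ℓ : Module.Dual ℝ U) : ∃! u : U, ∀ w, ⟪S u, S w⟫ = ℓ w := by
  let e := S.gramForm.toDual (S.gramForm_nondegenerate hS)
  refine ⟨e.symm ℓ, fun w => S.gramForm.apply_toDual_symm_apply ℓ w, fun u hu => ?_⟩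
  exact e.eq_symm_apply.mpr (LinearMap.ext hu)

theorem Submodule.injective_orthogonalProjectionOnto_comp (K : Submodule ℝ V)
    [K.HasOrthogonalProjection] (S : U →ₗ[ℝ] V)
    (hS : ∀ u ≠ 0, ∃ v ∈ K, ⟪S u, v⟫ ≠ 0) :
    Injective ((K.orthogonalProjectionOnto : V →ₗ[ℝ] K) ∘ₗ S) := by
  refine (injective_iff_map_eq_zero _).mpr fun u hu => ?_
  by_contra hu0
  obtain ⟨v, hv, hne⟩ := hS u hu0
  apply hne
  have hu' : K.orthogonalProjectionOnto (S u) = 0 := hu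
  simpa [hu'] using (K.inner_orthogonalProjectionOnto_eq_of_mem_right ⟨v, hv⟩ (S u)).symm

end

/-- If `U_H` is a finite-dimensional subspace of `U` and for every nonzero
`w_H ∈ U_H` there is `v_h ∈ V_h` with `b(w_H, v_h) ≠ 0`, then for every `f ∈ V'` there
is a unique `u_H ∈ U_H` with `b(u_H, v) = f(v)` for all `v` in the near-optimal test
space `V^n.opt(U_H, V_h) = P(T(U_H))`. -/
theorem stmt_9
    {U V : Type*} [NormedAddCommGroup U] [NormedSpace ℝ U]
    [NormedAddCommGroup V] [InnerProductSpace ℝ V]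
    (B : U →L[ℝ] (V →L[ℝ] ℝ))
    (T : U → V) (hT : ∀ (w : U) (v : V), ⟪T w, v⟫ = B w v)
    (V_h : Submodule ℝ V) [V_h.HasOrthogonalProjection]
    (U_H : Submodule ℝ U) [FiniteDimensional ℝ U_H]
    (hnondeg : ∀ w_H ∈ U_H, w_H ≠ 0 → ∃ v_h ∈ V_h, B w_H v_h ≠ 0)
    (f : V →L[ℝ] ℝ) :
    ∃! u_H : U_H,
      ∀ v ∈ (fun w => (V_h.orthogonalProjectionOnto (T w) : V)) '' (U_H : Set U),
        B (u_H : U) v = f v := by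
  let Tₗ := LinearMap.ofInnerLeft T (fun v => (B.flip v : U →ₗ[ℝ] ℝ)) hT
  let S := (V_h.orthogonalProjectionOnto : V →ₗ[ℝ] V_h) ∘ₗ Tₗ ∘ₗ U_H.subtype
  have hS : Injective S := V_h.injective_orthogonalProjectionOnto_comp _ fun w hw => by
    simpa [Tₗ, LinearMap.ofInnerLeft, hT] using hnondeg w w.2 (by simpa using hw)
  have hB : ∀ u w : U_H, B u (S w) = ⟪S u, S w⟫ := fun u w => by
    rw [← hT]
    exact (V_h.inner_orthogonalProjectionOnto_eq_of_mem_right (S w) (T u)).symm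
  have hiff : ∀ u : U_H, (∀ v ∈ (fun w => (V_h.orthogonalProjectionOnto (T w) : V)) '' U_H,
      B u v = f v) ↔ ∀ w, ⟪S u, S w⟫ = (f.toLinearMap ∘ₗ V_h.subtype ∘ₗ S) w := fun u => by
    simp only [Set.forall_mem_image, SetLike.mem_coe, ← hB]
    exact ⟨fun h w => h w.2, fun h w hw => h ⟨w, hw⟩⟩
  exact (existsUnique_congr hiff).mpr (LinearMap.existsUnique_inner_eq_of_injective hS _)
end

section
/- Fix u ∈ U and suppose b(u, v) = Σ_{K∈𝒦} b_K(u, v) for all v ∈ V_h. Let v̄ ∈ V_h satisfy the global test-function equation ⟨v̄, v⟩_V = b(u, v) for all v ∈ V_h, and for each K let v̄_K ∈ V_{h,K} be the unique solution of the local problem ⟨v̄_K, v⟩_V = b_K(u, v) for all v ∈ V_{h,K}. Then the global solution decomposes into the local ones: v̄ = Σ_{K∈𝒦} v̄_K. -/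
open scoped RealInnerProductSpace

/-- With a finite family of pairwise orthogonal closed local test-search
spaces `V_{h,K}` whose sum is `V_h`, local bilinear forms `b_K` vanishing on the other
cells' spaces, and `b(u,·) = ∑_K b_K(u,·)` on `V_h`: if `v̄ ∈ V_h` solves the global
test-function equation and each `v̄_K ∈ V_{h,K}` solves the local one, then
`v̄ = ∑_K v̄_K`. -/
theorem stmt_10
    {U V : Type*} [NormedAddCommGroup U] [NormedSpace ℝ U]
    [NormedAddCommGroup V] [InnerProductSpace ℝ V]
    {ι : Type*} [Fintype ι]
    (W : ι → Submodule ℝ V)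
    (hclosed : ∀ K, IsClosed ((W K : Set V)))
    (hortho : ∀ K K', K ≠ K' → ∀ x ∈ W K, ∀ y ∈ W K', ⟪x, y⟫ = 0)
    (B : U →L[ℝ] (V →L[ℝ] ℝ)) (bK : ι → U →L[ℝ] (V →L[ℝ] ℝ))
    (hlocal : ∀ K K', K' ≠ K → ∀ (u : U), ∀ v ∈ W K', bK K u v = 0)
    (u : U)
    (hdecomp : ∀ v ∈ (⨆ K, W K : Submodule ℝ V), B u v = ∑ K, bK K u v)
    (vbar : V) (hvbar_mem : vbar ∈ (⨆ K, W K : Submodule ℝ V))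
    (hvbar : ∀ v ∈ (⨆ K, W K : Submodule ℝ V), ⟪vbar, v⟫ = B u v)
    (vK : ι → V) (hvK_mem : ∀ K, vK K ∈ W K)
    (hvK : ∀ K, ∀ v ∈ W K, ⟪vK K, v⟫ = bK K u v) :
    vbar = ∑ K, vK K := by
  set w : V := vbar - ∑ K, vK K with hw
  have hwmem : w ∈ (⨆ K, W K : Submodule ℝ V) := by
    apply Submodule.sub_mem _ hvbar_mem
    exact Submodule.sum_mem _ fun K _ => Submodule.mem_iSup_of_mem K (hvK_mem K)
  -- on each W K', ⟪w, v⟫ = 0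
  have hkey : ∀ K', ∀ v ∈ W K', ⟪w, v⟫ = 0 := by
    intro K' v hv
    have hvsup : v ∈ (⨆ K, W K : Submodule ℝ V) := Submodule.mem_iSup_of_mem K' hv
    have h1 : ⟪vbar, v⟫ = ∑ K, bK K u v := by
      rw [hvbar v hvsup, hdecomp v hvsup]
    have h2 : ⟪∑ K, vK K, v⟫ = ∑ K, bK K u v := by
      rw [sum_inner]
      refine Finset.sum_congr rfl fun K _ => ?_
      by_cases hKK : K = K'
      · subst hKK; exact hvK K v hv
      · rw [hortho K K' hKK (vK K) (hvK_mem K) v hv,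
          hlocal K K' (Ne.symm hKK) u v hv]
    rw [hw, inner_sub_left, h1, h2, sub_self]
  -- extend to the sup via kernel submodule
  have hall : ∀ v ∈ (⨆ K, W K : Submodule ℝ V), ⟪w, v⟫ = 0 := by
    intro v hv
    have hle : (⨆ K, W K : Submodule ℝ V) ≤ LinearMap.ker ((innerSL ℝ w : V →L[ℝ] ℝ) : V →ₗ[ℝ] ℝ) := by
      refine iSup_le fun K x hx => ?_
      simpa using hkey K x hx
    simpa using hle hv
  have : ⟪w, w⟫ = 0 := hall w hwmem
  have hw0 : w = 0 := by
    rwa [real_inner_self_eq_norm_sq, pow_eq_zero_iff (by norm_num), norm_eq_zero] at this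
  have := sub_eq_zero.mp hw0
  simpa using this
end

section
/- Fix u ∈ U, fix K₀ ∈ 𝒦, and suppose b(u, v) = Σ_{K∈𝒦} b_K(u, v) for all v ∈ V_h. Assume additionally that u is supported in cell K₀ in the sense that b_{K'}(u, v) = 0 for all K' ≠ K₀ and all v ∈ V_{h,K'}. Then the near-optimal test function v̄ ∈ V_h determined by ⟨v̄, v⟩_V = b(u, v) for all v ∈ V_h lies in the single local space V_{h,K₀}. -/
open scoped RealInnerProductSpace

/-- In the setting of pairwise orthogonal closed local spaces `V_{h,K}`
summing to `V_h`, with `b(u,·) = ∑_K b_K(u,·)` on `V_h` and with `u` supported in cell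
`K₀` (i.e. `b_{K'}(u, v) = 0` for all `K' ≠ K₀` and `v ∈ V_{h,K'}`), the near-optimal
test function `v̄ ∈ V_h`, determined by `⟪v̄, v⟫ = b(u,v)` for all `v ∈ V_h`, lies in
the single local space `V_{h,K₀}`. -/
theorem stmt_11
    {U V : Type*} [NormedAddCommGroup U] [NormedSpace ℝ U]
    [NormedAddCommGroup V] [InnerProductSpace ℝ V]
    {ι : Type*} [Fintype ι]
    (W : ι → Submodule ℝ V)
    (hclosed : ∀ K, IsClosed ((W K : Set V)))
    (hortho : ∀ K K', K ≠ K' → ∀ x ∈ W K, ∀ y ∈ W K', ⟪x, y⟫ = 0)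
    (B : U →L[ℝ] (V →L[ℝ] ℝ)) (bK : ι → U →L[ℝ] (V →L[ℝ] ℝ))
    (hlocal : ∀ K K', K' ≠ K → ∀ (u : U), ∀ v ∈ W K', bK K u v = 0)
    (u : U) (K₀ : ι)
    (hdecomp : ∀ v ∈ (⨆ K, W K : Submodule ℝ V), B u v = ∑ K, bK K u v)
    (hsupp : ∀ K', K' ≠ K₀ → ∀ v ∈ W K', bK K' u v = 0)
    (vbar : V) (hvbar_mem : vbar ∈ (⨆ K, W K : Submodule ℝ V))
    (hvbar : ∀ v ∈ (⨆ K, W K : Submodule ℝ V), ⟪vbar, v⟫ = B u v) :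
    vbar ∈ W K₀ := by
  classical
  -- key fact: vbar is orthogonal to every W K' with K' ≠ K₀
  have key : ∀ K', K' ≠ K₀ → ∀ v ∈ W K', ⟪vbar, v⟫ = 0 := by
    intro K' hK' v hv
    have hvsup : v ∈ (⨆ K, W K : Submodule ℝ V) := Submodule.mem_iSup_of_mem K' hv
    rw [hvbar v hvsup, hdecomp v hvsup]
    apply Finset.sum_eq_zero
    intro K _
    by_cases h : K = K'
    · subst h; exact hsupp K hK' v hv
    · exact hlocal K K' (Ne.symm h) u v hv
  -- decompose vbar
  obtain ⟨f, hf⟩ := (Submodule.mem_iSup_iff_exists_dfinsupp' W vbar).mp hvbar_mem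
  have hsum : vbar = ∑ i : ι, ((f i : V)) := by
    rw [← hf, DFinsupp.sum]
    rw [Finset.sum_subset (Finset.subset_univ _)]
    intro x _ hx
    simp [DFinsupp.notMem_support_iff.mp hx]
  set y : V := vbar - (f K₀ : V) with hy
  have hyker : ∀ i, i ≠ K₀ → ⟪y, (f i : V)⟫ = 0 := by
    intro i hi
    have h1 : ⟪vbar, (f i : V)⟫ = 0 := key i hi _ (f i).2
    have h2 : ⟪(f K₀ : V), (f i : V)⟫ = 0 :=
      hortho K₀ i (Ne.symm hi) _ (f K₀).2 _ (f i).2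
    simp [hy, inner_sub_left, h1, h2]
  have hyzero : y = 0 := by
    have : ⟪y, y⟫ = 0 := by
      have hy2 : y = ∑ i ∈ Finset.univ.erase K₀, ((f i : V)) := by
        rw [hy, hsum, ← Finset.add_sum_erase _ _ (Finset.mem_univ K₀)]
        abel
      calc ⟪y, y⟫ = ∑ i ∈ Finset.univ.erase K₀, ⟪y, (f i : V)⟫ := by
            rw [hy2, inner_sum]
        _ = 0 := Finset.sum_eq_zero fun i hi =>
            hyker i (Finset.ne_of_mem_erase hi)
    exact inner_self_eq_zero.mp this
  have : vbar = (f K₀ : V) := by rwa [sub_eq_zero] at hyzero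
  rw [this]; exact (f K₀).2
end
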